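/- On the split octonions, the subspace of elements commuting with J̃ = Ẽ⁴τ inside so(4,3) contains two commuting Lie subalgebras: K₁ = span{Ẽ^iẼ^j : 1≤i<j≤3} ≅ su(2) and K₂ = span{Ẽ^iẼ^j : 4≤i<j≤7} ≅ sl(2,ℂ) (as a real Lie algebra), and [K₁, K₂] = 0. -/
import Mathlib


open Matrix BigOperators

noncomputable section

def sIdx : Fin 8 → Fin 8 → Fin 8 :=
  ![![0, 1, 2, 3, 4, 5, 6, 7],
    ![1, 0, 7, 6, 5, 4, 3, 2],
    ![2, 7, 0, 5, 6, 3, 4, 1],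
    ![3, 6, 5, 0, 7, 2, 1, 4],
    ![4, 5, 6, 7, 0, 1, 2, 3],
    ![5, 4, 3, 2, 1, 0, 7, 6],
    ![6, 3, 4, 1, 2, 7, 0, 5],
    ![7, 2, 1, 4, 3, 6, 5, 0]]

def sSgn : Fin 8 → Fin 8 → ℝ :=
  ![![1, 1, 1, 1, 1, 1, 1, 1],
    ![1, 1, 1, -1, 1, 1, -1, 1],
    ![1, -1, 1, 1, 1, 1, 1, -1],
    ![1, 1, -1, 1, 1, -1, 1, 1],
    ![1, -1, -1, -1, 1, -1, -1, -1],
    ![1, -1, -1, 1, 1, -1, 1, -1],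
    ![1, 1, -1, -1, 1, -1, -1, 1],
    ![1, -1, 1, -1, 1, 1, -1, -1]]

/-- Left multiplication by the split octonion `y` as an 8×8 real matrix. -/
def Lt (y : Fin 8 → ℝ) : Matrix (Fin 8) (Fin 8) ℝ :=
  Matrix.of fun r c => ∑ i, if r = sIdx i c then sSgn i c * y i else 0

/-- The imaginary split octonion unit `ẽ^(i+1)` as a vector. -/
def et (i : Fin 7) : Fin 8 → ℝ := Pi.single i.succ 1

/-- The Clifford generator `Ẽ^(i+1) = L_{ẽ^(i+1)}`. -/
def Et (i : Fin 7) : Matrix (Fin 8) (Fin 8) ℝ := Lt (et i)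

/-- The complex structure `J̃ = Ẽ⁴ τ`. -/
def Jt : Matrix (Fin 8) (Fin 8) ℝ := Et 3 * (Et 4 * Et 5 * Et 6)

/-- `K₁ = span{Ẽ^iẼ^j : 1 ≤ i < j ≤ 3}`. -/
def K1 : Submodule ℝ (Matrix (Fin 8) (Fin 8) ℝ) :=
  Submodule.span ℝ {M | ∃ i j : Fin 7, i < j ∧ (j : ℕ) ≤ 2 ∧ M = Et i * Et j}

/-- `K₂ = span{Ẽ^iẼ^j : 4 ≤ i < j ≤ 7}`. -/
def K2 : Submodule ℝ (Matrix (Fin 8) (Fin 8) ℝ) :=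
  Submodule.span ℝ {M | ∃ i j : Fin 7, i < j ∧ 3 ≤ (i : ℕ) ∧ M = Et i * Et j}

/-! ### Auxiliary material -/

set_option maxHeartbeats 1000000

def zSgn : Fin 8 → Fin 8 → ℤ :=
  ![![1, 1, 1, 1, 1, 1, 1, 1],
    ![1, 1, 1, -1, 1, 1, -1, 1],
    ![1, -1, 1, 1, 1, 1, 1, -1],
    ![1, 1, -1, 1, 1, -1, 1, 1],
    ![1, -1, -1, -1, 1, -1, -1, -1],
    ![1, -1, -1, 1, 1, -1, 1, -1],
    ![1, 1, -1, -1, 1, -1, -1, 1],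
    ![1, -1, 1, -1, 1, 1, -1, -1]]

lemma sSgn_eq : ∀ i c, sSgn i c = ((zSgn i c : ℤ) : ℝ) := by
  intro i c
  fin_cases i <;> fin_cases c <;>
    first
      | (show (1:ℝ) = ((1:ℤ):ℝ); norm_num)
      | (show (-1:ℝ) = ((-1:ℤ):ℝ); norm_num)

def zE (k : Fin 7) : Matrix (Fin 8) (Fin 8) ℤ :=
  Matrix.of fun r c => if r = sIdx k.succ c then zSgn k.succ c else 0

lemma Et_apply (k : Fin 7) (r c : Fin 8) :
    Et k r c = if r = sIdx k.succ c then sSgn k.succ c else 0 := by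
  unfold Et Lt et
  rw [Matrix.of_apply]
  rw [Finset.sum_eq_single k.succ]
  · simp
  · intro i _ hne
    simp [Pi.single_eq_of_ne hne]
  · simp

def cm (A : Matrix (Fin 8) (Fin 8) ℤ) : Matrix (Fin 8) (Fin 8) ℝ :=
  A.map (Int.cast : ℤ → ℝ)

lemma Et_eq (k : Fin 7) : Et k = cm (zE k) := by
  ext r c
  rw [Et_apply]
  show _ = ((zE k) r c : ℝ)
  unfold zE
  rw [Matrix.of_apply, apply_ite (Int.cast : ℤ → ℝ), sSgn_eq]
  norm_num

lemma cm_mul (A B : Matrix (Fin 8) (Fin 8) ℤ) : cm (A * B) = cm A * cm B :=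
  Matrix.map_mul (f := Int.castRingHom ℝ)

lemma cm_add (A B : Matrix (Fin 8) (Fin 8) ℤ) : cm (A + B) = cm A + cm B := by
  ext i j; simp [cm, Matrix.map_apply, Matrix.add_apply]

lemma cm_sub (A B : Matrix (Fin 8) (Fin 8) ℤ) : cm (A - B) = cm A - cm B := by
  ext i j; simp [cm, Matrix.map_apply, Matrix.sub_apply]

lemma cm_neg (A : Matrix (Fin 8) (Fin 8) ℤ) : cm (-A) = -cm A := by
  ext i j; simp [cm, Matrix.map_apply, Matrix.neg_apply]

def zJ : Matrix (Fin 8) (Fin 8) ℤ := zE 3 * (zE 4 * zE 5 * zE 6)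

lemma Jt_eq : Jt = cm zJ := by
  unfold Jt
  rw [Et_eq 3, Et_eq 4, Et_eq 5, Et_eq 6]
  rw [← cm_mul (zE 4) (zE 5), ← cm_mul (zE 4 * zE 5) (zE 6), ← cm_mul]
  rfl

def zG0 : Matrix (Fin 8) (Fin 8) ℤ :=
  !![0, 0, 0, 0, 0, 0, 0, -1;
      0, 0, 1, 0, 0, 0, 0, 0;
      0, -1, 0, 0, 0, 0, 0, 0;
      0, 0, 0, 0, -1, 0, 0, 0;
      0, 0, 0, 1, 0, 0, 0, 0;
      0, 0, 0, 0, 0, 0, 1, 0;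
      0, 0, 0, 0, 0, -1, 0, 0;
      1, 0, 0, 0, 0, 0, 0, 0]

def zG1 : Matrix (Fin 8) (Fin 8) ℤ :=
  !![0, 0, 0, 0, 0, 0, 1, 0;
      0, 0, 0, 1, 0, 0, 0, 0;
      0, 0, 0, 0, 1, 0, 0, 0;
      0, -1, 0, 0, 0, 0, 0, 0;
      0, 0, -1, 0, 0, 0, 0, 0;
      0, 0, 0, 0, 0, 0, 0, 1;
      -1, 0, 0, 0, 0, 0, 0, 0;
      0, 0, 0, 0, 0, -1, 0, 0]

def zG2 : Matrix (Fin 8) (Fin 8) ℤ :=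
  !![0, 0, 0, 0, 0, -1, 0, 0;
      0, 0, 0, 0, -1, 0, 0, 0;
      0, 0, 0, 1, 0, 0, 0, 0;
      0, 0, -1, 0, 0, 0, 0, 0;
      0, 1, 0, 0, 0, 0, 0, 0;
      1, 0, 0, 0, 0, 0, 0, 0;
      0, 0, 0, 0, 0, 0, 0, 1;
      0, 0, 0, 0, 0, 0, -1, 0]

def zH0 : Matrix (Fin 8) (Fin 8) ℤ :=
  !![0, -1, 0, 0, 0, 0, 0, 0;
      -1, 0, 0, 0, 0, 0, 0, 0;
      0, 0, 0, 0, 0, 0, 0, 1;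
      0, 0, 0, 0, 0, 0, -1, 0;
      0, 0, 0, 0, 0, -1, 0, 0;
      0, 0, 0, 0, -1, 0, 0, 0;
      0, 0, 0, -1, 0, 0, 0, 0;
      0, 0, 1, 0, 0, 0, 0, 0]

def zH1 : Matrix (Fin 8) (Fin 8) ℤ :=
  !![0, 0, -1, 0, 0, 0, 0, 0;
      0, 0, 0, 0, 0, 0, 0, -1;
      -1, 0, 0, 0, 0, 0, 0, 0;
      0, 0, 0, 0, 0, 1, 0, 0;
      0, 0, 0, 0, 0, 0, -1, 0;
      0, 0, 0, 1, 0, 0, 0, 0;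
      0, 0, 0, 0, -1, 0, 0, 0;
      0, -1, 0, 0, 0, 0, 0, 0]

def zH2 : Matrix (Fin 8) (Fin 8) ℤ :=
  !![0, 0, 0, -1, 0, 0, 0, 0;
      0, 0, 0, 0, 0, 0, 1, 0;
      0, 0, 0, 0, 0, -1, 0, 0;
      -1, 0, 0, 0, 0, 0, 0, 0;
      0, 0, 0, 0, 0, 0, 0, -1;
      0, 0, -1, 0, 0, 0, 0, 0;
      0, 1, 0, 0, 0, 0, 0, 0;
      0, 0, 0, 0, -1, 0, 0, 0]

def zH3 : Matrix (Fin 8) (Fin 8) ℤ :=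
  !![0, 0, 0, 0, 0, 0, 0, -1;
      0, 0, -1, 0, 0, 0, 0, 0;
      0, 1, 0, 0, 0, 0, 0, 0;
      0, 0, 0, 0, -1, 0, 0, 0;
      0, 0, 0, 1, 0, 0, 0, 0;
      0, 0, 0, 0, 0, 0, -1, 0;
      0, 0, 0, 0, 0, 1, 0, 0;
      1, 0, 0, 0, 0, 0, 0, 0]

def zH4 : Matrix (Fin 8) (Fin 8) ℤ :=
  !![0, 0, 0, 0, 0, 0, 1, 0;
      0, 0, 0, -1, 0, 0, 0, 0;
      0, 0, 0, 0, 1, 0, 0, 0;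
      0, 1, 0, 0, 0, 0, 0, 0;
      0, 0, -1, 0, 0, 0, 0, 0;
      0, 0, 0, 0, 0, 0, 0, -1;
      -1, 0, 0, 0, 0, 0, 0, 0;
      0, 0, 0, 0, 0, 1, 0, 0]

def zH5 : Matrix (Fin 8) (Fin 8) ℤ :=
  !![0, 0, 0, 0, 0, -1, 0, 0;
      0, 0, 0, 0, -1, 0, 0, 0;
      0, 0, 0, -1, 0, 0, 0, 0;
      0, 0, 1, 0, 0, 0, 0, 0;
      0, 1, 0, 0, 0, 0, 0, 0;
      1, 0, 0, 0, 0, 0, 0, 0;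
      0, 0, 0, 0, 0, 0, 0, -1;
      0, 0, 0, 0, 0, 0, 1, 0]

lemma zmulG0 : zE 0 * zE 1 = zG0 := by decide
lemma zmulG1 : zE 0 * zE 2 = zG1 := by decide
lemma zmulG2 : zE 1 * zE 2 = zG2 := by decide
lemma zmulH0 : zE 3 * zE 4 = zH0 := by decide
lemma zmulH1 : zE 3 * zE 5 = zH1 := by decide
lemma zmulH2 : zE 3 * zE 6 = zH2 := by decide
lemma zmulH3 : zE 4 * zE 5 = zH3 := by decide
lemma zmulH4 : zE 4 * zE 6 = zH4 := by decide
lemma zmulH5 : zE 5 * zE 6 = zH5 := by decide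

def rG0 : Matrix (Fin 8) (Fin 8) ℝ := cm zG0
def rG1 : Matrix (Fin 8) (Fin 8) ℝ := cm zG1
def rG2 : Matrix (Fin 8) (Fin 8) ℝ := cm zG2
def rH0 : Matrix (Fin 8) (Fin 8) ℝ := cm zH0
def rH1 : Matrix (Fin 8) (Fin 8) ℝ := cm zH1
def rH2 : Matrix (Fin 8) (Fin 8) ℝ := cm zH2
def rH3 : Matrix (Fin 8) (Fin 8) ℝ := cm zH3
def rH4 : Matrix (Fin 8) (Fin 8) ℝ := cm zH4
def rH5 : Matrix (Fin 8) (Fin 8) ℝ := cm zH5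

lemma prodG0 : Et 0 * Et 1 = rG0 := by
  rw [Et_eq 0, Et_eq 1]
  show cm (zE 0) * cm (zE 1) = rG0
  rw [← cm_mul, zmulG0]
  rfl

lemma prodG1 : Et 0 * Et 2 = rG1 := by
  rw [Et_eq 0, Et_eq 2]
  show cm (zE 0) * cm (zE 2) = rG1
  rw [← cm_mul, zmulG1]
  rfl

lemma prodG2 : Et 1 * Et 2 = rG2 := by
  rw [Et_eq 1, Et_eq 2]
  show cm (zE 1) * cm (zE 2) = rG2
  rw [← cm_mul, zmulG2]
  rfl

lemma prodH0 : Et 3 * Et 4 = rH0 := by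
  rw [Et_eq 3, Et_eq 4]
  show cm (zE 3) * cm (zE 4) = rH0
  rw [← cm_mul, zmulH0]
  rfl

lemma prodH1 : Et 3 * Et 5 = rH1 := by
  rw [Et_eq 3, Et_eq 5]
  show cm (zE 3) * cm (zE 5) = rH1
  rw [← cm_mul, zmulH1]
  rfl

lemma prodH2 : Et 3 * Et 6 = rH2 := by
  rw [Et_eq 3, Et_eq 6]
  show cm (zE 3) * cm (zE 6) = rH2
  rw [← cm_mul, zmulH2]
  rfl

lemma prodH3 : Et 4 * Et 5 = rH3 := by
  rw [Et_eq 4, Et_eq 5]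
  show cm (zE 4) * cm (zE 5) = rH3
  rw [← cm_mul, zmulH3]
  rfl

lemma prodH4 : Et 4 * Et 6 = rH4 := by
  rw [Et_eq 4, Et_eq 6]
  show cm (zE 4) * cm (zE 6) = rH4
  rw [← cm_mul, zmulH4]
  rfl

lemma prodH5 : Et 5 * Et 6 = rH5 := by
  rw [Et_eq 5, Et_eq 6]
  show cm (zE 5) * cm (zE 6) = rH5
  rw [← cm_mul, zmulH5]
  rfl

lemma zcJG0 : zG0 * zJ = zJ * zG0 := by decide
lemma zcJG1 : zG1 * zJ = zJ * zG1 := by decide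
lemma zcJG2 : zG2 * zJ = zJ * zG2 := by decide
lemma zcJH0 : zH0 * zJ = zJ * zH0 := by decide
lemma zcJH1 : zH1 * zJ = zJ * zH1 := by decide
lemma zcJH2 : zH2 * zJ = zJ * zH2 := by decide
lemma zcJH3 : zH3 * zJ = zJ * zH3 := by decide
lemma zcJH4 : zH4 * zJ = zJ * zH4 := by decide
lemma zcJH5 : zH5 * zJ = zJ * zH5 := by decide

lemma cJG0 : rG0 * Jt = Jt * rG0 := by
  rw [Jt_eq]
  show cm zG0 * cm zJ = cm zJ * cm zG0
  rw [← cm_mul, ← cm_mul, zcJG0]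

lemma cJG1 : rG1 * Jt = Jt * rG1 := by
  rw [Jt_eq]
  show cm zG1 * cm zJ = cm zJ * cm zG1
  rw [← cm_mul, ← cm_mul, zcJG1]

lemma cJG2 : rG2 * Jt = Jt * rG2 := by
  rw [Jt_eq]
  show cm zG2 * cm zJ = cm zJ * cm zG2
  rw [← cm_mul, ← cm_mul, zcJG2]

lemma cJH0 : rH0 * Jt = Jt * rH0 := by
  rw [Jt_eq]
  show cm zH0 * cm zJ = cm zJ * cm zH0
  rw [← cm_mul, ← cm_mul, zcJH0]

lemma cJH1 : rH1 * Jt = Jt * rH1 := by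
  rw [Jt_eq]
  show cm zH1 * cm zJ = cm zJ * cm zH1
  rw [← cm_mul, ← cm_mul, zcJH1]

lemma cJH2 : rH2 * Jt = Jt * rH2 := by
  rw [Jt_eq]
  show cm zH2 * cm zJ = cm zJ * cm zH2
  rw [← cm_mul, ← cm_mul, zcJH2]

lemma cJH3 : rH3 * Jt = Jt * rH3 := by
  rw [Jt_eq]
  show cm zH3 * cm zJ = cm zJ * cm zH3
  rw [← cm_mul, ← cm_mul, zcJH3]

lemma cJH4 : rH4 * Jt = Jt * rH4 := by
  rw [Jt_eq]
  show cm zH4 * cm zJ = cm zJ * cm zH4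
  rw [← cm_mul, ← cm_mul, zcJH4]

lemma cJH5 : rH5 * Jt = Jt * rH5 := by
  rw [Jt_eq]
  show cm zH5 * cm zJ = cm zJ * cm zH5
  rw [← cm_mul, ← cm_mul, zcJH5]

lemma zcx00 : zG0 * zH0 = zH0 * zG0 := by decide
lemma zcx01 : zG0 * zH1 = zH1 * zG0 := by decide
lemma zcx02 : zG0 * zH2 = zH2 * zG0 := by decide
lemma zcx03 : zG0 * zH3 = zH3 * zG0 := by decide
lemma zcx04 : zG0 * zH4 = zH4 * zG0 := by decide
lemma zcx05 : zG0 * zH5 = zH5 * zG0 := by decide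
lemma zcx10 : zG1 * zH0 = zH0 * zG1 := by decide
lemma zcx11 : zG1 * zH1 = zH1 * zG1 := by decide
lemma zcx12 : zG1 * zH2 = zH2 * zG1 := by decide
lemma zcx13 : zG1 * zH3 = zH3 * zG1 := by decide
lemma zcx14 : zG1 * zH4 = zH4 * zG1 := by decide
lemma zcx15 : zG1 * zH5 = zH5 * zG1 := by decide
lemma zcx20 : zG2 * zH0 = zH0 * zG2 := by decide
lemma zcx21 : zG2 * zH1 = zH1 * zG2 := by decide
lemma zcx22 : zG2 * zH2 = zH2 * zG2 := by decide
lemma zcx23 : zG2 * zH3 = zH3 * zG2 := by decide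
lemma zcx24 : zG2 * zH4 = zH4 * zG2 := by decide
lemma zcx25 : zG2 * zH5 = zH5 * zG2 := by decide

lemma cx00 : rG0 * rH0 = rH0 * rG0 := by
  show cm zG0 * cm zH0 = cm zH0 * cm zG0
  rw [← cm_mul, ← cm_mul, zcx00]

lemma cx01 : rG0 * rH1 = rH1 * rG0 := by
  show cm zG0 * cm zH1 = cm zH1 * cm zG0
  rw [← cm_mul, ← cm_mul, zcx01]

lemma cx02 : rG0 * rH2 = rH2 * rG0 := by
  show cm zG0 * cm zH2 = cm zH2 * cm zG0
  rw [← cm_mul, ← cm_mul, zcx02]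

lemma cx03 : rG0 * rH3 = rH3 * rG0 := by
  show cm zG0 * cm zH3 = cm zH3 * cm zG0
  rw [← cm_mul, ← cm_mul, zcx03]

lemma cx04 : rG0 * rH4 = rH4 * rG0 := by
  show cm zG0 * cm zH4 = cm zH4 * cm zG0
  rw [← cm_mul, ← cm_mul, zcx04]

lemma cx05 : rG0 * rH5 = rH5 * rG0 := by
  show cm zG0 * cm zH5 = cm zH5 * cm zG0
  rw [← cm_mul, ← cm_mul, zcx05]

lemma cx10 : rG1 * rH0 = rH0 * rG1 := by
  show cm zG1 * cm zH0 = cm zH0 * cm zG1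
  rw [← cm_mul, ← cm_mul, zcx10]

lemma cx11 : rG1 * rH1 = rH1 * rG1 := by
  show cm zG1 * cm zH1 = cm zH1 * cm zG1
  rw [← cm_mul, ← cm_mul, zcx11]

lemma cx12 : rG1 * rH2 = rH2 * rG1 := by
  show cm zG1 * cm zH2 = cm zH2 * cm zG1
  rw [← cm_mul, ← cm_mul, zcx12]

lemma cx13 : rG1 * rH3 = rH3 * rG1 := by
  show cm zG1 * cm zH3 = cm zH3 * cm zG1
  rw [← cm_mul, ← cm_mul, zcx13]

lemma cx14 : rG1 * rH4 = rH4 * rG1 := by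
  show cm zG1 * cm zH4 = cm zH4 * cm zG1
  rw [← cm_mul, ← cm_mul, zcx14]

lemma cx15 : rG1 * rH5 = rH5 * rG1 := by
  show cm zG1 * cm zH5 = cm zH5 * cm zG1
  rw [← cm_mul, ← cm_mul, zcx15]

lemma cx20 : rG2 * rH0 = rH0 * rG2 := by
  show cm zG2 * cm zH0 = cm zH0 * cm zG2
  rw [← cm_mul, ← cm_mul, zcx20]

lemma cx21 : rG2 * rH1 = rH1 * rG2 := by
  show cm zG2 * cm zH1 = cm zH1 * cm zG2
  rw [← cm_mul, ← cm_mul, zcx21]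

lemma cx22 : rG2 * rH2 = rH2 * rG2 := by
  show cm zG2 * cm zH2 = cm zH2 * cm zG2
  rw [← cm_mul, ← cm_mul, zcx22]

lemma cx23 : rG2 * rH3 = rH3 * rG2 := by
  show cm zG2 * cm zH3 = cm zH3 * cm zG2
  rw [← cm_mul, ← cm_mul, zcx23]

lemma cx24 : rG2 * rH4 = rH4 * rG2 := by
  show cm zG2 * cm zH4 = cm zH4 * cm zG2
  rw [← cm_mul, ← cm_mul, zcx24]

lemma cx25 : rG2 * rH5 = rH5 * rG2 := by
  show cm zG2 * cm zH5 = cm zH5 * cm zG2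
  rw [← cm_mul, ← cm_mul, zcx25]

lemma zbrG01 : zG0 * zG1 - zG1 * zG0 = -(zG2 + zG2) := by decide
lemma zbrG02 : zG0 * zG2 - zG2 * zG0 = zG1 + zG1 := by decide
lemma zbrG10 : zG1 * zG0 - zG0 * zG1 = zG2 + zG2 := by decide
lemma zbrG12 : zG1 * zG2 - zG2 * zG1 = -(zG0 + zG0) := by decide
lemma zbrG20 : zG2 * zG0 - zG0 * zG2 = -(zG1 + zG1) := by decide
lemma zbrG21 : zG2 * zG1 - zG1 * zG2 = zG0 + zG0 := by decide
lemma zbrH01 : zH0 * zH1 - zH1 * zH0 = -(zH3 + zH3) := by decide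
lemma zbrH02 : zH0 * zH2 - zH2 * zH0 = -(zH4 + zH4) := by decide
lemma zbrH03 : zH0 * zH3 - zH3 * zH0 = -(zH1 + zH1) := by decide
lemma zbrH04 : zH0 * zH4 - zH4 * zH0 = -(zH2 + zH2) := by decide
lemma zchH05 : zH0 * zH5 = zH5 * zH0 := by decide
lemma zbrH10 : zH1 * zH0 - zH0 * zH1 = zH3 + zH3 := by decide
lemma zbrH12 : zH1 * zH2 - zH2 * zH1 = -(zH5 + zH5) := by decide
lemma zbrH13 : zH1 * zH3 - zH3 * zH1 = zH0 + zH0 := by decide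
lemma zchH14 : zH1 * zH4 = zH4 * zH1 := by decide
lemma zbrH15 : zH1 * zH5 - zH5 * zH1 = -(zH2 + zH2) := by decide
lemma zbrH20 : zH2 * zH0 - zH0 * zH2 = zH4 + zH4 := by decide
lemma zbrH21 : zH2 * zH1 - zH1 * zH2 = zH5 + zH5 := by decide
lemma zchH23 : zH2 * zH3 = zH3 * zH2 := by decide
lemma zbrH24 : zH2 * zH4 - zH4 * zH2 = zH0 + zH0 := by decide
lemma zbrH25 : zH2 * zH5 - zH5 * zH2 = zH1 + zH1 := by decide
lemma zbrH30 : zH3 * zH0 - zH0 * zH3 = zH1 + zH1 := by decide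
lemma zbrH31 : zH3 * zH1 - zH1 * zH3 = -(zH0 + zH0) := by decide
lemma zbrH34 : zH3 * zH4 - zH4 * zH3 = zH5 + zH5 := by decide
lemma zbrH35 : zH3 * zH5 - zH5 * zH3 = -(zH4 + zH4) := by decide
lemma zbrH40 : zH4 * zH0 - zH0 * zH4 = zH2 + zH2 := by decide
lemma zbrH42 : zH4 * zH2 - zH2 * zH4 = -(zH0 + zH0) := by decide
lemma zbrH43 : zH4 * zH3 - zH3 * zH4 = -(zH5 + zH5) := by decide
lemma zbrH45 : zH4 * zH5 - zH5 * zH4 = zH3 + zH3 := by decide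
lemma zbrH51 : zH5 * zH1 - zH1 * zH5 = zH2 + zH2 := by decide
lemma zbrH52 : zH5 * zH2 - zH2 * zH5 = -(zH1 + zH1) := by decide
lemma zbrH53 : zH5 * zH3 - zH3 * zH5 = zH4 + zH4 := by decide
lemma zbrH54 : zH5 * zH4 - zH4 * zH5 = -(zH3 + zH3) := by decide

lemma brG01 : rG0 * rG1 - rG1 * rG0 = -(rG2 + rG2) := by
  show cm zG0 * cm zG1 - cm zG1 * cm zG0 = _
  rw [← cm_mul, ← cm_mul, ← cm_sub, zbrG01, cm_neg, cm_add]
  rfl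

lemma brG02 : rG0 * rG2 - rG2 * rG0 = rG1 + rG1 := by
  show cm zG0 * cm zG2 - cm zG2 * cm zG0 = _
  rw [← cm_mul, ← cm_mul, ← cm_sub, zbrG02, cm_add]
  rfl

lemma brG10 : rG1 * rG0 - rG0 * rG1 = rG2 + rG2 := by
  show cm zG1 * cm zG0 - cm zG0 * cm zG1 = _
  rw [← cm_mul, ← cm_mul, ← cm_sub, zbrG10, cm_add]
  rfl

lemma brG12 : rG1 * rG2 - rG2 * rG1 = -(rG0 + rG0) := by
  show cm zG1 * cm zG2 - cm zG2 * cm zG1 = _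
  rw [← cm_mul, ← cm_mul, ← cm_sub, zbrG12, cm_neg, cm_add]
  rfl

lemma brG20 : rG2 * rG0 - rG0 * rG2 = -(rG1 + rG1) := by
  show cm zG2 * cm zG0 - cm zG0 * cm zG2 = _
  rw [← cm_mul, ← cm_mul, ← cm_sub, zbrG20, cm_neg, cm_add]
  rfl

lemma brG21 : rG2 * rG1 - rG1 * rG2 = rG0 + rG0 := by
  show cm zG2 * cm zG1 - cm zG1 * cm zG2 = _
  rw [← cm_mul, ← cm_mul, ← cm_sub, zbrG21, cm_add]
  rfl

lemma brH01 : rH0 * rH1 - rH1 * rH0 = -(rH3 + rH3) := by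
  show cm zH0 * cm zH1 - cm zH1 * cm zH0 = _
  rw [← cm_mul, ← cm_mul, ← cm_sub, zbrH01, cm_neg, cm_add]
  rfl

lemma brH02 : rH0 * rH2 - rH2 * rH0 = -(rH4 + rH4) := by
  show cm zH0 * cm zH2 - cm zH2 * cm zH0 = _
  rw [← cm_mul, ← cm_mul, ← cm_sub, zbrH02, cm_neg, cm_add]
  rfl

lemma brH03 : rH0 * rH3 - rH3 * rH0 = -(rH1 + rH1) := by
  show cm zH0 * cm zH3 - cm zH3 * cm zH0 = _
  rw [← cm_mul, ← cm_mul, ← cm_sub, zbrH03, cm_neg, cm_add]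
  rfl

lemma brH04 : rH0 * rH4 - rH4 * rH0 = -(rH2 + rH2) := by
  show cm zH0 * cm zH4 - cm zH4 * cm zH0 = _
  rw [← cm_mul, ← cm_mul, ← cm_sub, zbrH04, cm_neg, cm_add]
  rfl

lemma chH05 : rH0 * rH5 = rH5 * rH0 := by
  show cm zH0 * cm zH5 = cm zH5 * cm zH0
  rw [← cm_mul, ← cm_mul, zchH05]

lemma brH10 : rH1 * rH0 - rH0 * rH1 = rH3 + rH3 := by
  show cm zH1 * cm zH0 - cm zH0 * cm zH1 = _
  rw [← cm_mul, ← cm_mul, ← cm_sub, zbrH10, cm_add]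
  rfl

lemma brH12 : rH1 * rH2 - rH2 * rH1 = -(rH5 + rH5) := by
  show cm zH1 * cm zH2 - cm zH2 * cm zH1 = _
  rw [← cm_mul, ← cm_mul, ← cm_sub, zbrH12, cm_neg, cm_add]
  rfl

lemma brH13 : rH1 * rH3 - rH3 * rH1 = rH0 + rH0 := by
  show cm zH1 * cm zH3 - cm zH3 * cm zH1 = _
  rw [← cm_mul, ← cm_mul, ← cm_sub, zbrH13, cm_add]
  rfl

lemma chH14 : rH1 * rH4 = rH4 * rH1 := by
  show cm zH1 * cm zH4 = cm zH4 * cm zH1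
  rw [← cm_mul, ← cm_mul, zchH14]

lemma brH15 : rH1 * rH5 - rH5 * rH1 = -(rH2 + rH2) := by
  show cm zH1 * cm zH5 - cm zH5 * cm zH1 = _
  rw [← cm_mul, ← cm_mul, ← cm_sub, zbrH15, cm_neg, cm_add]
  rfl

lemma brH20 : rH2 * rH0 - rH0 * rH2 = rH4 + rH4 := by
  show cm zH2 * cm zH0 - cm zH0 * cm zH2 = _
  rw [← cm_mul, ← cm_mul, ← cm_sub, zbrH20, cm_add]
  rfl

lemma brH21 : rH2 * rH1 - rH1 * rH2 = rH5 + rH5 := by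
  show cm zH2 * cm zH1 - cm zH1 * cm zH2 = _
  rw [← cm_mul, ← cm_mul, ← cm_sub, zbrH21, cm_add]
  rfl

lemma chH23 : rH2 * rH3 = rH3 * rH2 := by
  show cm zH2 * cm zH3 = cm zH3 * cm zH2
  rw [← cm_mul, ← cm_mul, zchH23]

lemma brH24 : rH2 * rH4 - rH4 * rH2 = rH0 + rH0 := by
  show cm zH2 * cm zH4 - cm zH4 * cm zH2 = _
  rw [← cm_mul, ← cm_mul, ← cm_sub, zbrH24, cm_add]
  rfl

lemma brH25 : rH2 * rH5 - rH5 * rH2 = rH1 + rH1 := by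
  show cm zH2 * cm zH5 - cm zH5 * cm zH2 = _
  rw [← cm_mul, ← cm_mul, ← cm_sub, zbrH25, cm_add]
  rfl

lemma brH30 : rH3 * rH0 - rH0 * rH3 = rH1 + rH1 := by
  show cm zH3 * cm zH0 - cm zH0 * cm zH3 = _
  rw [← cm_mul, ← cm_mul, ← cm_sub, zbrH30, cm_add]
  rfl

lemma brH31 : rH3 * rH1 - rH1 * rH3 = -(rH0 + rH0) := by
  show cm zH3 * cm zH1 - cm zH1 * cm zH3 = _
  rw [← cm_mul, ← cm_mul, ← cm_sub, zbrH31, cm_neg, cm_add]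
  rfl

lemma brH34 : rH3 * rH4 - rH4 * rH3 = rH5 + rH5 := by
  show cm zH3 * cm zH4 - cm zH4 * cm zH3 = _
  rw [← cm_mul, ← cm_mul, ← cm_sub, zbrH34, cm_add]
  rfl

lemma brH35 : rH3 * rH5 - rH5 * rH3 = -(rH4 + rH4) := by
  show cm zH3 * cm zH5 - cm zH5 * cm zH3 = _
  rw [← cm_mul, ← cm_mul, ← cm_sub, zbrH35, cm_neg, cm_add]
  rfl

lemma brH40 : rH4 * rH0 - rH0 * rH4 = rH2 + rH2 := by
  show cm zH4 * cm zH0 - cm zH0 * cm zH4 = _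
  rw [← cm_mul, ← cm_mul, ← cm_sub, zbrH40, cm_add]
  rfl

lemma brH42 : rH4 * rH2 - rH2 * rH4 = -(rH0 + rH0) := by
  show cm zH4 * cm zH2 - cm zH2 * cm zH4 = _
  rw [← cm_mul, ← cm_mul, ← cm_sub, zbrH42, cm_neg, cm_add]
  rfl

lemma brH43 : rH4 * rH3 - rH3 * rH4 = -(rH5 + rH5) := by
  show cm zH4 * cm zH3 - cm zH3 * cm zH4 = _
  rw [← cm_mul, ← cm_mul, ← cm_sub, zbrH43, cm_neg, cm_add]
  rfl

lemma brH45 : rH4 * rH5 - rH5 * rH4 = rH3 + rH3 := by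
  show cm zH4 * cm zH5 - cm zH5 * cm zH4 = _
  rw [← cm_mul, ← cm_mul, ← cm_sub, zbrH45, cm_add]
  rfl

lemma brH51 : rH5 * rH1 - rH1 * rH5 = rH2 + rH2 := by
  show cm zH5 * cm zH1 - cm zH1 * cm zH5 = _
  rw [← cm_mul, ← cm_mul, ← cm_sub, zbrH51, cm_add]
  rfl

lemma brH52 : rH5 * rH2 - rH2 * rH5 = -(rH1 + rH1) := by
  show cm zH5 * cm zH2 - cm zH2 * cm zH5 = _
  rw [← cm_mul, ← cm_mul, ← cm_sub, zbrH52, cm_neg, cm_add]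
  rfl

lemma brH53 : rH5 * rH3 - rH3 * rH5 = rH4 + rH4 := by
  show cm zH5 * cm zH3 - cm zH3 * cm zH5 = _
  rw [← cm_mul, ← cm_mul, ← cm_sub, zbrH53, cm_add]
  rfl

lemma brH54 : rH5 * rH4 - rH4 * rH5 = -(rH3 + rH3) := by
  show cm zH5 * cm zH4 - cm zH4 * cm zH5 = _
  rw [← cm_mul, ← cm_mul, ← cm_sub, zbrH54, cm_neg, cm_add]
  rfl

/-! ### 2×2 complex model matrices -/

def X0 : Matrix (Fin 2) (Fin 2) ℂ := !![0, Complex.I; Complex.I, 0]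
def X1 : Matrix (Fin 2) (Fin 2) ℂ := !![0, 1; -1, 0]
def X2 : Matrix (Fin 2) (Fin 2) ℂ := !![Complex.I, 0; 0, -Complex.I]
def Y0 : Matrix (Fin 2) (Fin 2) ℂ := !![1, 0; 0, -1]
def Y1 : Matrix (Fin 2) (Fin 2) ℂ := !![0, Complex.I; -Complex.I, 0]
def Y2 : Matrix (Fin 2) (Fin 2) ℂ := !![0, 1; 1, 0]
def Y3 : Matrix (Fin 2) (Fin 2) ℂ := !![0, -Complex.I; -Complex.I, 0]
def Y4 : Matrix (Fin 2) (Fin 2) ℂ := !![0, -1; 1, 0]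
def Y5 : Matrix (Fin 2) (Fin 2) ℂ := !![-Complex.I, 0; 0, Complex.I]

lemma bX01 : X0 * X1 - X1 * X0 = -(X2 + X2) := by
  ext i j
  fin_cases i <;> fin_cases j <;>
    simp [X0, X1, X2, Y0, Y1, Y2, Y3, Y4, Y5, Matrix.mul_apply, Fin.sum_univ_two,
      Complex.ext_iff] <;> ring_nf <;> norm_num

lemma bX02 : X0 * X2 - X2 * X0 = X1 + X1 := by
  ext i j
  fin_cases i <;> fin_cases j <;>
    simp [X0, X1, X2, Y0, Y1, Y2, Y3, Y4, Y5, Matrix.mul_apply, Fin.sum_univ_two,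
      Complex.ext_iff] <;> ring_nf <;> norm_num

lemma bX10 : X1 * X0 - X0 * X1 = X2 + X2 := by
  ext i j
  fin_cases i <;> fin_cases j <;>
    simp [X0, X1, X2, Y0, Y1, Y2, Y3, Y4, Y5, Matrix.mul_apply, Fin.sum_univ_two,
      Complex.ext_iff] <;> ring_nf <;> norm_num

lemma bX12 : X1 * X2 - X2 * X1 = -(X0 + X0) := by
  ext i j
  fin_cases i <;> fin_cases j <;>
    simp [X0, X1, X2, Y0, Y1, Y2, Y3, Y4, Y5, Matrix.mul_apply, Fin.sum_univ_two,
      Complex.ext_iff] <;> ring_nf <;> norm_num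

lemma bX20 : X2 * X0 - X0 * X2 = -(X1 + X1) := by
  ext i j
  fin_cases i <;> fin_cases j <;>
    simp [X0, X1, X2, Y0, Y1, Y2, Y3, Y4, Y5, Matrix.mul_apply, Fin.sum_univ_two,
      Complex.ext_iff] <;> ring_nf <;> norm_num

lemma bX21 : X2 * X1 - X1 * X2 = X0 + X0 := by
  ext i j
  fin_cases i <;> fin_cases j <;>
    simp [X0, X1, X2, Y0, Y1, Y2, Y3, Y4, Y5, Matrix.mul_apply, Fin.sum_univ_two,
      Complex.ext_iff] <;> ring_nf <;> norm_num

lemma bY01 : Y0 * Y1 - Y1 * Y0 = -(Y3 + Y3) := by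
  ext i j
  fin_cases i <;> fin_cases j <;>
    simp [X0, X1, X2, Y0, Y1, Y2, Y3, Y4, Y5, Matrix.mul_apply, Fin.sum_univ_two,
      Complex.ext_iff] <;> ring_nf <;> norm_num

lemma bY02 : Y0 * Y2 - Y2 * Y0 = -(Y4 + Y4) := by
  ext i j
  fin_cases i <;> fin_cases j <;>
    simp [X0, X1, X2, Y0, Y1, Y2, Y3, Y4, Y5, Matrix.mul_apply, Fin.sum_univ_two,
      Complex.ext_iff] <;> ring_nf <;> norm_num

lemma bY03 : Y0 * Y3 - Y3 * Y0 = -(Y1 + Y1) := by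
  ext i j
  fin_cases i <;> fin_cases j <;>
    simp [X0, X1, X2, Y0, Y1, Y2, Y3, Y4, Y5, Matrix.mul_apply, Fin.sum_univ_two,
      Complex.ext_iff] <;> ring_nf <;> norm_num

lemma bY04 : Y0 * Y4 - Y4 * Y0 = -(Y2 + Y2) := by
  ext i j
  fin_cases i <;> fin_cases j <;>
    simp [X0, X1, X2, Y0, Y1, Y2, Y3, Y4, Y5, Matrix.mul_apply, Fin.sum_univ_two,
      Complex.ext_iff] <;> ring_nf <;> norm_num

lemma bY05 : Y0 * Y5 - Y5 * Y0 = 0 := by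
  ext i j
  fin_cases i <;> fin_cases j <;>
    simp [X0, X1, X2, Y0, Y1, Y2, Y3, Y4, Y5, Matrix.mul_apply, Fin.sum_univ_two,
      Complex.ext_iff] <;> ring_nf <;> norm_num

lemma bY10 : Y1 * Y0 - Y0 * Y1 = Y3 + Y3 := by
  ext i j
  fin_cases i <;> fin_cases j <;>
    simp [X0, X1, X2, Y0, Y1, Y2, Y3, Y4, Y5, Matrix.mul_apply, Fin.sum_univ_two,
      Complex.ext_iff] <;> ring_nf <;> norm_num

lemma bY12 : Y1 * Y2 - Y2 * Y1 = -(Y5 + Y5) := by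
  ext i j
  fin_cases i <;> fin_cases j <;>
    simp [X0, X1, X2, Y0, Y1, Y2, Y3, Y4, Y5, Matrix.mul_apply, Fin.sum_univ_two,
      Complex.ext_iff] <;> ring_nf <;> norm_num

lemma bY13 : Y1 * Y3 - Y3 * Y1 = Y0 + Y0 := by
  ext i j
  fin_cases i <;> fin_cases j <;>
    simp [X0, X1, X2, Y0, Y1, Y2, Y3, Y4, Y5, Matrix.mul_apply, Fin.sum_univ_two,
      Complex.ext_iff] <;> ring_nf <;> norm_num

lemma bY14 : Y1 * Y4 - Y4 * Y1 = 0 := by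
  ext i j
  fin_cases i <;> fin_cases j <;>
    simp [X0, X1, X2, Y0, Y1, Y2, Y3, Y4, Y5, Matrix.mul_apply, Fin.sum_univ_two,
      Complex.ext_iff] <;> ring_nf <;> norm_num

lemma bY15 : Y1 * Y5 - Y5 * Y1 = -(Y2 + Y2) := by
  ext i j
  fin_cases i <;> fin_cases j <;>
    simp [X0, X1, X2, Y0, Y1, Y2, Y3, Y4, Y5, Matrix.mul_apply, Fin.sum_univ_two,
      Complex.ext_iff] <;> ring_nf <;> norm_num

lemma bY20 : Y2 * Y0 - Y0 * Y2 = Y4 + Y4 := by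
  ext i j
  fin_cases i <;> fin_cases j <;>
    simp [X0, X1, X2, Y0, Y1, Y2, Y3, Y4, Y5, Matrix.mul_apply, Fin.sum_univ_two,
      Complex.ext_iff] <;> ring_nf <;> norm_num

lemma bY21 : Y2 * Y1 - Y1 * Y2 = Y5 + Y5 := by
  ext i j
  fin_cases i <;> fin_cases j <;>
    simp [X0, X1, X2, Y0, Y1, Y2, Y3, Y4, Y5, Matrix.mul_apply, Fin.sum_univ_two,
      Complex.ext_iff] <;> ring_nf <;> norm_num

lemma bY23 : Y2 * Y3 - Y3 * Y2 = 0 := by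
  ext i j
  fin_cases i <;> fin_cases j <;>
    simp [X0, X1, X2, Y0, Y1, Y2, Y3, Y4, Y5, Matrix.mul_apply, Fin.sum_univ_two,
      Complex.ext_iff] <;> ring_nf <;> norm_num

lemma bY24 : Y2 * Y4 - Y4 * Y2 = Y0 + Y0 := by
  ext i j
  fin_cases i <;> fin_cases j <;>
    simp [X0, X1, X2, Y0, Y1, Y2, Y3, Y4, Y5, Matrix.mul_apply, Fin.sum_univ_two,
      Complex.ext_iff] <;> ring_nf <;> norm_num

lemma bY25 : Y2 * Y5 - Y5 * Y2 = Y1 + Y1 := by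
  ext i j
  fin_cases i <;> fin_cases j <;>
    simp [X0, X1, X2, Y0, Y1, Y2, Y3, Y4, Y5, Matrix.mul_apply, Fin.sum_univ_two,
      Complex.ext_iff] <;> ring_nf <;> norm_num

lemma bY30 : Y3 * Y0 - Y0 * Y3 = Y1 + Y1 := by
  ext i j
  fin_cases i <;> fin_cases j <;>
    simp [X0, X1, X2, Y0, Y1, Y2, Y3, Y4, Y5, Matrix.mul_apply, Fin.sum_univ_two,
      Complex.ext_iff] <;> ring_nf <;> norm_num

lemma bY31 : Y3 * Y1 - Y1 * Y3 = -(Y0 + Y0) := by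
  ext i j
  fin_cases i <;> fin_cases j <;>
    simp [X0, X1, X2, Y0, Y1, Y2, Y3, Y4, Y5, Matrix.mul_apply, Fin.sum_univ_two,
      Complex.ext_iff] <;> ring_nf <;> norm_num

lemma bY32 : Y3 * Y2 - Y2 * Y3 = 0 := by
  ext i j
  fin_cases i <;> fin_cases j <;>
    simp [X0, X1, X2, Y0, Y1, Y2, Y3, Y4, Y5, Matrix.mul_apply, Fin.sum_univ_two,
      Complex.ext_iff] <;> ring_nf <;> norm_num

lemma bY34 : Y3 * Y4 - Y4 * Y3 = Y5 + Y5 := by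
  ext i j
  fin_cases i <;> fin_cases j <;>
    simp [X0, X1, X2, Y0, Y1, Y2, Y3, Y4, Y5, Matrix.mul_apply, Fin.sum_univ_two,
      Complex.ext_iff] <;> ring_nf <;> norm_num

lemma bY35 : Y3 * Y5 - Y5 * Y3 = -(Y4 + Y4) := by
  ext i j
  fin_cases i <;> fin_cases j <;>
    simp [X0, X1, X2, Y0, Y1, Y2, Y3, Y4, Y5, Matrix.mul_apply, Fin.sum_univ_two,
      Complex.ext_iff] <;> ring_nf <;> norm_num

lemma bY40 : Y4 * Y0 - Y0 * Y4 = Y2 + Y2 := by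
  ext i j
  fin_cases i <;> fin_cases j <;>
    simp [X0, X1, X2, Y0, Y1, Y2, Y3, Y4, Y5, Matrix.mul_apply, Fin.sum_univ_two,
      Complex.ext_iff] <;> ring_nf <;> norm_num

lemma bY41 : Y4 * Y1 - Y1 * Y4 = 0 := by
  ext i j
  fin_cases i <;> fin_cases j <;>
    simp [X0, X1, X2, Y0, Y1, Y2, Y3, Y4, Y5, Matrix.mul_apply, Fin.sum_univ_two,
      Complex.ext_iff] <;> ring_nf <;> norm_num

lemma bY42 : Y4 * Y2 - Y2 * Y4 = -(Y0 + Y0) := by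
  ext i j
  fin_cases i <;> fin_cases j <;>
    simp [X0, X1, X2, Y0, Y1, Y2, Y3, Y4, Y5, Matrix.mul_apply, Fin.sum_univ_two,
      Complex.ext_iff] <;> ring_nf <;> norm_num

lemma bY43 : Y4 * Y3 - Y3 * Y4 = -(Y5 + Y5) := by
  ext i j
  fin_cases i <;> fin_cases j <;>
    simp [X0, X1, X2, Y0, Y1, Y2, Y3, Y4, Y5, Matrix.mul_apply, Fin.sum_univ_two,
      Complex.ext_iff] <;> ring_nf <;> norm_num

lemma bY45 : Y4 * Y5 - Y5 * Y4 = Y3 + Y3 := by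
  ext i j
  fin_cases i <;> fin_cases j <;>
    simp [X0, X1, X2, Y0, Y1, Y2, Y3, Y4, Y5, Matrix.mul_apply, Fin.sum_univ_two,
      Complex.ext_iff] <;> ring_nf <;> norm_num

lemma bY50 : Y5 * Y0 - Y0 * Y5 = 0 := by
  ext i j
  fin_cases i <;> fin_cases j <;>
    simp [X0, X1, X2, Y0, Y1, Y2, Y3, Y4, Y5, Matrix.mul_apply, Fin.sum_univ_two,
      Complex.ext_iff] <;> ring_nf <;> norm_num

lemma bY51 : Y5 * Y1 - Y1 * Y5 = Y2 + Y2 := by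
  ext i j
  fin_cases i <;> fin_cases j <;>
    simp [X0, X1, X2, Y0, Y1, Y2, Y3, Y4, Y5, Matrix.mul_apply, Fin.sum_univ_two,
      Complex.ext_iff] <;> ring_nf <;> norm_num

lemma bY52 : Y5 * Y2 - Y2 * Y5 = -(Y1 + Y1) := by
  ext i j
  fin_cases i <;> fin_cases j <;>
    simp [X0, X1, X2, Y0, Y1, Y2, Y3, Y4, Y5, Matrix.mul_apply, Fin.sum_univ_two,
      Complex.ext_iff] <;> ring_nf <;> norm_num

lemma bY53 : Y5 * Y3 - Y3 * Y5 = Y4 + Y4 := by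
  ext i j
  fin_cases i <;> fin_cases j <;>
    simp [X0, X1, X2, Y0, Y1, Y2, Y3, Y4, Y5, Matrix.mul_apply, Fin.sum_univ_two,
      Complex.ext_iff] <;> ring_nf <;> norm_num

lemma bY54 : Y5 * Y4 - Y4 * Y5 = -(Y3 + Y3) := by
  ext i j
  fin_cases i <;> fin_cases j <;>
    simp [X0, X1, X2, Y0, Y1, Y2, Y3, Y4, Y5, Matrix.mul_apply, Fin.sum_univ_two,
      Complex.ext_iff] <;> ring_nf <;> norm_num

/-! ### Generic span lemmas -/

section SpanLemmas

variable {R : Type*} [CommRing R] {A : Type*} [Ring A] [Algebra R A]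
  {B : Type*} [Ring B] [Algebra R B]

lemma span_comm {S : Set A} {J : A} (h : ∀ a ∈ S, a * J = J * a) :
    ∀ x ∈ Submodule.span R S, x * J = J * x := by
  intro x hx
  induction hx using Submodule.span_induction with
  | mem a ha => exact h a ha
  | zero => simp
  | add a b _ _ ha hb => rw [add_mul, mul_add, ha, hb]
  | smul r a _ ha => rw [smul_mul_assoc, mul_smul_comm, ha]

lemma span_comm₂ {S T : Set A} (h : ∀ a ∈ S, ∀ b ∈ T, a * b = b * a) :
    ∀ x ∈ Submodule.span R S, ∀ y ∈ Submodule.span R T, x * y = y * x := by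
  intro x hx
  induction hx using Submodule.span_induction with
  | mem a ha =>
      intro y hy
      exact (span_comm (fun b hb => (h a ha b hb).symm) y hy).symm
  | zero => intro y hy; simp
  | add a b _ _ ha hb => intro y hy; rw [add_mul, mul_add, ha y hy, hb y hy]
  | smul r a _ ha => intro y hy; rw [smul_mul_assoc, mul_smul_comm, ha y hy]

lemma span_bracket {S : Set A}
    (h : ∀ a ∈ S, ∀ b ∈ S, a * b - b * a ∈ Submodule.span R S) :
    ∀ x ∈ Submodule.span R S, ∀ y ∈ Submodule.span R S,
      x * y - y * x ∈ Submodule.span R S := by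
  intro x hx y hy
  induction hx, hy using Submodule.span_induction₂ with
  | mem_mem a b ha hb => exact h a ha b hb
  | zero_left y hy => simpa using Submodule.zero_mem _
  | zero_right x hx => simpa using Submodule.zero_mem _
  | add_left x y z hx hy hz h1 h2 =>
      have h3 := Submodule.add_mem _ h1 h2
      convert h3 using 1
      noncomm_ring
  | add_right x y z hx hy hz h1 h2 =>
      have h3 := Submodule.add_mem _ h1 h2
      convert h3 using 1
      noncomm_ring
  | smul_left r x y hx hy h1 =>
      have h3 := Submodule.smul_mem _ r h1
      convert h3 using 1
      rw [smul_sub, smul_mul_assoc, mul_smul_comm]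
  | smul_right r x y hx hy h1 =>
      have h3 := Submodule.smul_mem _ r h1
      convert h3 using 1
      rw [smul_sub, smul_mul_assoc, mul_smul_comm]

lemma span_lie_hom (f : A →ₗ[R] B) {S : Set A}
    (h : ∀ a ∈ S, ∀ b ∈ S, f (a * b - b * a) = f a * f b - f b * f a) :
    ∀ x ∈ Submodule.span R S, ∀ y ∈ Submodule.span R S,
      f (x * y - y * x) = f x * f y - f y * f x := by
  intro x hx y hy
  induction hx, hy using Submodule.span_induction₂ with
  | mem_mem a b ha hb => exact h a ha b hb
  | zero_left y hy => simp
  | zero_right x hx => simp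
  | add_left x y z hx hy hz h1 h2 =>
      have e : (x + y) * z - z * (x + y) = (x * z - z * x) + (y * z - z * y) := by
        noncomm_ring
      rw [e, _root_.map_add, h1, h2, _root_.map_add]
      noncomm_ring
  | add_right x y z hx hy hz h1 h2 =>
      have e : x * (y + z) - (y + z) * x = (x * y - y * x) + (x * z - z * x) := by
        noncomm_ring
      rw [e, _root_.map_add, h1, h2, _root_.map_add]
      noncomm_ring
  | smul_left r x y hx hy h1 =>
      have e : (r • x) * y - y * (r • x) = r • (x * y - y * x) := by
        rw [smul_mul_assoc, mul_smul_comm, smul_sub]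
      rw [e, _root_.map_smul, h1, _root_.map_smul, smul_sub, smul_mul_assoc, mul_smul_comm]
  | smul_right r x y hx hy h1 =>
      have e : x * (r • y) - (r • y) * x = r • (x * y - y * x) := by
        rw [smul_mul_assoc, mul_smul_comm, smul_sub]
      rw [e, _root_.map_smul, h1, _root_.map_smul, smul_sub, smul_mul_assoc, mul_smul_comm]

end SpanLemmas

lemma span_leftinv {R M N : Type*} [CommSemiring R] [AddCommMonoid M] [Module R M]
    [AddCommMonoid N] [Module R N] (f : M →ₗ[R] N) (φ : N →ₗ[R] M) {S : Set M}
    (h : ∀ a ∈ S, φ (f a) = a) : ∀ x ∈ Submodule.span R S, φ (f x) = x := by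
  intro x hx
  induction hx using Submodule.span_induction with
  | mem a ha => exact h a ha
  | zero => simp
  | add a b _ _ ha hb => simp [ha, hb]
  | smul r a _ ha => simp [ha]

/-! ### The linear maps -/

def SG : Set (Matrix (Fin 8) (Fin 8) ℝ) := {rG0, rG1, rG2}
def SH : Set (Matrix (Fin 8) (Fin 8) ℝ) := {rH0, rH1, rH2, rH3, rH4, rH5}

def fL : Matrix (Fin 8) (Fin 8) ℝ →ₗ[ℝ] Matrix (Fin 2) (Fin 2) ℂ where
  toFun M := (-(M 0 7)) • X0 + (M 0 6) • X1 + (-(M 0 5)) • X2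
  map_add' M N := by
    simp only [Matrix.add_apply]
    module
  map_smul' r M := by
    simp only [Matrix.smul_apply, smul_eq_mul, RingHom.id_apply]
    module

def gL : Matrix (Fin 8) (Fin 8) ℝ →ₗ[ℝ] Matrix (Fin 2) (Fin 2) ℂ where
  toFun M := (-(M 0 1)) • Y0 + (-(M 0 2)) • Y1 + (-(M 0 3)) • Y2 +
    (-(M 0 7)) • Y3 + (M 0 6) • Y4 + (-(M 0 5)) • Y5
  map_add' M N := by
    simp only [Matrix.add_apply]
    module
  map_smul' r M := by
    simp only [Matrix.smul_apply, smul_eq_mul, RingHom.id_apply]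
    module

def phiF : Matrix (Fin 2) (Fin 2) ℂ →ₗ[ℝ] Matrix (Fin 8) (Fin 8) ℝ where
  toFun N := (N 0 1).im • rG0 + (N 0 1).re • rG1 + (N 0 0).im • rG2
  map_add' M N := by
    simp only [Matrix.add_apply, Complex.add_re, Complex.add_im]
    module
  map_smul' r M := by
    simp only [Matrix.smul_apply, Complex.smul_re, Complex.smul_im, smul_eq_mul,
      RingHom.id_apply]
    module

def psiG : Matrix (Fin 2) (Fin 2) ℂ →ₗ[ℝ] Matrix (Fin 8) (Fin 8) ℝ where
  toFun N := (N 0 0).re • rH0 + (((N 0 1).im - (N 1 0).im) / 2) • rH1 +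
    (((N 0 1).re + (N 1 0).re) / 2) • rH2 + ((-((N 0 1).im + (N 1 0).im)) / 2) • rH3 +
    (((N 1 0).re - (N 0 1).re) / 2) • rH4 + (-(N 0 0).im) • rH5
  map_add' M N := by
    simp only [Matrix.add_apply, Complex.add_re, Complex.add_im]
    module
  map_smul' r M := by
    simp only [Matrix.smul_apply, Complex.smul_re, Complex.smul_im, smul_eq_mul,
      RingHom.id_apply]
    module

lemma frG0 : fL rG0 = X0 := by
  show (-(((zG0 0 7 : ℤ) : ℝ))) • X0 + ((zG0 0 6 : ℤ) : ℝ) • X1 +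
    (-(((zG0 0 5 : ℤ) : ℝ))) • X2 = X0
  rw [show (zG0 0 7 : ℤ) = -1 from by decide,
    show (zG0 0 6 : ℤ) = 0 from by decide,
    show (zG0 0 5 : ℤ) = 0 from by decide]
  norm_num

lemma frG1 : fL rG1 = X1 := by
  show (-(((zG1 0 7 : ℤ) : ℝ))) • X0 + ((zG1 0 6 : ℤ) : ℝ) • X1 +
    (-(((zG1 0 5 : ℤ) : ℝ))) • X2 = X1
  rw [show (zG1 0 7 : ℤ) = 0 from by decide,
    show (zG1 0 6 : ℤ) = 1 from by decide,
    show (zG1 0 5 : ℤ) = 0 from by decide]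
  norm_num

lemma frG2 : fL rG2 = X2 := by
  show (-(((zG2 0 7 : ℤ) : ℝ))) • X0 + ((zG2 0 6 : ℤ) : ℝ) • X1 +
    (-(((zG2 0 5 : ℤ) : ℝ))) • X2 = X2
  rw [show (zG2 0 7 : ℤ) = 0 from by decide,
    show (zG2 0 6 : ℤ) = 0 from by decide,
    show (zG2 0 5 : ℤ) = -1 from by decide]
  norm_num

lemma grH0 : gL rH0 = Y0 := by
  show (-(((zH0 0 1 : ℤ) : ℝ))) • Y0 + (-(((zH0 0 2 : ℤ) : ℝ))) • Y1 +
    (-(((zH0 0 3 : ℤ) : ℝ))) • Y2 + (-(((zH0 0 7 : ℤ) : ℝ))) • Y3 +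
    ((zH0 0 6 : ℤ) : ℝ) • Y4 + (-(((zH0 0 5 : ℤ) : ℝ))) • Y5 = Y0
  rw [show (zH0 0 1 : ℤ) = -1 from by decide,
    show (zH0 0 2 : ℤ) = 0 from by decide,
    show (zH0 0 3 : ℤ) = 0 from by decide,
    show (zH0 0 7 : ℤ) = 0 from by decide,
    show (zH0 0 6 : ℤ) = 0 from by decide,
    show (zH0 0 5 : ℤ) = 0 from by decide]
  norm_num

lemma grH1 : gL rH1 = Y1 := by
  show (-(((zH1 0 1 : ℤ) : ℝ))) • Y0 + (-(((zH1 0 2 : ℤ) : ℝ))) • Y1 +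
    (-(((zH1 0 3 : ℤ) : ℝ))) • Y2 + (-(((zH1 0 7 : ℤ) : ℝ))) • Y3 +
    ((zH1 0 6 : ℤ) : ℝ) • Y4 + (-(((zH1 0 5 : ℤ) : ℝ))) • Y5 = Y1
  rw [show (zH1 0 1 : ℤ) = 0 from by decide,
    show (zH1 0 2 : ℤ) = -1 from by decide,
    show (zH1 0 3 : ℤ) = 0 from by decide,
    show (zH1 0 7 : ℤ) = 0 from by decide,
    show (zH1 0 6 : ℤ) = 0 from by decide,
    show (zH1 0 5 : ℤ) = 0 from by decide]
  norm_num

lemma grH2 : gL rH2 = Y2 := by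
  show (-(((zH2 0 1 : ℤ) : ℝ))) • Y0 + (-(((zH2 0 2 : ℤ) : ℝ))) • Y1 +
    (-(((zH2 0 3 : ℤ) : ℝ))) • Y2 + (-(((zH2 0 7 : ℤ) : ℝ))) • Y3 +
    ((zH2 0 6 : ℤ) : ℝ) • Y4 + (-(((zH2 0 5 : ℤ) : ℝ))) • Y5 = Y2
  rw [show (zH2 0 1 : ℤ) = 0 from by decide,
    show (zH2 0 2 : ℤ) = 0 from by decide,
    show (zH2 0 3 : ℤ) = -1 from by decide,
    show (zH2 0 7 : ℤ) = 0 from by decide,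
    show (zH2 0 6 : ℤ) = 0 from by decide,
    show (zH2 0 5 : ℤ) = 0 from by decide]
  norm_num

lemma grH3 : gL rH3 = Y3 := by
  show (-(((zH3 0 1 : ℤ) : ℝ))) • Y0 + (-(((zH3 0 2 : ℤ) : ℝ))) • Y1 +
    (-(((zH3 0 3 : ℤ) : ℝ))) • Y2 + (-(((zH3 0 7 : ℤ) : ℝ))) • Y3 +
    ((zH3 0 6 : ℤ) : ℝ) • Y4 + (-(((zH3 0 5 : ℤ) : ℝ))) • Y5 = Y3
  rw [show (zH3 0 1 : ℤ) = 0 from by decide,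
    show (zH3 0 2 : ℤ) = 0 from by decide,
    show (zH3 0 3 : ℤ) = 0 from by decide,
    show (zH3 0 7 : ℤ) = -1 from by decide,
    show (zH3 0 6 : ℤ) = 0 from by decide,
    show (zH3 0 5 : ℤ) = 0 from by decide]
  norm_num

lemma grH4 : gL rH4 = Y4 := by
  show (-(((zH4 0 1 : ℤ) : ℝ))) • Y0 + (-(((zH4 0 2 : ℤ) : ℝ))) • Y1 +
    (-(((zH4 0 3 : ℤ) : ℝ))) • Y2 + (-(((zH4 0 7 : ℤ) : ℝ))) • Y3 +
    ((zH4 0 6 : ℤ) : ℝ) • Y4 + (-(((zH4 0 5 : ℤ) : ℝ))) • Y5 = Y4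
  rw [show (zH4 0 1 : ℤ) = 0 from by decide,
    show (zH4 0 2 : ℤ) = 0 from by decide,
    show (zH4 0 3 : ℤ) = 0 from by decide,
    show (zH4 0 7 : ℤ) = 0 from by decide,
    show (zH4 0 6 : ℤ) = 1 from by decide,
    show (zH4 0 5 : ℤ) = 0 from by decide]
  norm_num

lemma grH5 : gL rH5 = Y5 := by
  show (-(((zH5 0 1 : ℤ) : ℝ))) • Y0 + (-(((zH5 0 2 : ℤ) : ℝ))) • Y1 +
    (-(((zH5 0 3 : ℤ) : ℝ))) • Y2 + (-(((zH5 0 7 : ℤ) : ℝ))) • Y3 +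
    ((zH5 0 6 : ℤ) : ℝ) • Y4 + (-(((zH5 0 5 : ℤ) : ℝ))) • Y5 = Y5
  rw [show (zH5 0 1 : ℤ) = 0 from by decide,
    show (zH5 0 2 : ℤ) = 0 from by decide,
    show (zH5 0 3 : ℤ) = 0 from by decide,
    show (zH5 0 7 : ℤ) = 0 from by decide,
    show (zH5 0 6 : ℤ) = 0 from by decide,
    show (zH5 0 5 : ℤ) = -1 from by decide]
  norm_num

lemma phiX0 : phiF X0 = rG0 := by
  show (X0 0 1).im • rG0 + (X0 0 1).re • rG1 + (X0 0 0).im • rG2 = rG0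
  norm_num [X0]

lemma phiX1 : phiF X1 = rG1 := by
  show (X1 0 1).im • rG0 + (X1 0 1).re • rG1 + (X1 0 0).im • rG2 = rG1
  norm_num [X1]

lemma phiX2 : phiF X2 = rG2 := by
  show (X2 0 1).im • rG0 + (X2 0 1).re • rG1 + (X2 0 0).im • rG2 = rG2
  norm_num [X2]

lemma psiY0 : psiG Y0 = rH0 := by
  show (Y0 0 0).re • rH0 + (((Y0 0 1).im - (Y0 1 0).im) / 2) • rH1 +
    (((Y0 0 1).re + (Y0 1 0).re) / 2) • rH2 +
    ((-((Y0 0 1).im + (Y0 1 0).im)) / 2) • rH3 +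
    (((Y0 1 0).re - (Y0 0 1).re) / 2) • rH4 + (-(Y0 0 0).im) • rH5 = rH0
  norm_num [Y0]

lemma psiY1 : psiG Y1 = rH1 := by
  show (Y1 0 0).re • rH0 + (((Y1 0 1).im - (Y1 1 0).im) / 2) • rH1 +
    (((Y1 0 1).re + (Y1 1 0).re) / 2) • rH2 +
    ((-((Y1 0 1).im + (Y1 1 0).im)) / 2) • rH3 +
    (((Y1 1 0).re - (Y1 0 1).re) / 2) • rH4 + (-(Y1 0 0).im) • rH5 = rH1
  norm_num [Y1]

lemma psiY2 : psiG Y2 = rH2 := by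
  show (Y2 0 0).re • rH0 + (((Y2 0 1).im - (Y2 1 0).im) / 2) • rH1 +
    (((Y2 0 1).re + (Y2 1 0).re) / 2) • rH2 +
    ((-((Y2 0 1).im + (Y2 1 0).im)) / 2) • rH3 +
    (((Y2 1 0).re - (Y2 0 1).re) / 2) • rH4 + (-(Y2 0 0).im) • rH5 = rH2
  norm_num [Y2]

lemma psiY3 : psiG Y3 = rH3 := by
  show (Y3 0 0).re • rH0 + (((Y3 0 1).im - (Y3 1 0).im) / 2) • rH1 +
    (((Y3 0 1).re + (Y3 1 0).re) / 2) • rH2 +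
    ((-((Y3 0 1).im + (Y3 1 0).im)) / 2) • rH3 +
    (((Y3 1 0).re - (Y3 0 1).re) / 2) • rH4 + (-(Y3 0 0).im) • rH5 = rH3
  norm_num [Y3]

lemma psiY4 : psiG Y4 = rH4 := by
  show (Y4 0 0).re • rH0 + (((Y4 0 1).im - (Y4 1 0).im) / 2) • rH1 +
    (((Y4 0 1).re + (Y4 1 0).re) / 2) • rH2 +
    ((-((Y4 0 1).im + (Y4 1 0).im)) / 2) • rH3 +
    (((Y4 1 0).re - (Y4 0 1).re) / 2) • rH4 + (-(Y4 0 0).im) • rH5 = rH4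
  norm_num [Y4]

lemma psiY5 : psiG Y5 = rH5 := by
  show (Y5 0 0).re • rH0 + (((Y5 0 1).im - (Y5 1 0).im) / 2) • rH1 +
    (((Y5 0 1).re + (Y5 1 0).re) / 2) • rH2 +
    ((-((Y5 0 1).im + (Y5 1 0).im)) / 2) • rH3 +
    (((Y5 1 0).re - (Y5 0 1).re) / 2) • rH4 + (-(Y5 0 0).im) • rH5 = rH5
  norm_num [Y5]

/-! ### su(2) and sl(2,C) as submodules -/

def su2 : Submodule ℝ (Matrix (Fin 2) (Fin 2) ℂ) where
  carrier := {A | Aᴴ = -A ∧ A.trace = 0}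
  add_mem' := by
    rintro A B ⟨h1, h2⟩ ⟨h3, h4⟩
    refine ⟨?_, ?_⟩
    · rw [Matrix.conjTranspose_add, h1, h3, neg_add]
    · rw [Matrix.trace_add, h2, h4, add_zero]
  zero_mem' := ⟨by simp, by simp⟩
  smul_mem' := by
    rintro r A ⟨h1, h2⟩
    refine ⟨?_, ?_⟩
    · rw [Matrix.conjTranspose_smul, star_trivial, h1, smul_neg]
    · rw [Matrix.trace_smul, h2, smul_zero]

def sl2 : Submodule ℝ (Matrix (Fin 2) (Fin 2) ℂ) where
  carrier := {A | A.trace = 0}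
  add_mem' := by
    rintro A B h1 h2
    show (A + B).trace = 0
    rw [Matrix.trace_add, h1, h2, add_zero]
  zero_mem' := by simp
  smul_mem' := by
    rintro r A h1
    show (r • A).trace = 0
    rw [Matrix.trace_smul, h1, smul_zero]

lemma span_su2 :
    Submodule.span ℝ ({X0, X1, X2} : Set (Matrix (Fin 2) (Fin 2) ℂ)) = su2 := by
  apply le_antisymm
  · rw [Submodule.span_le]
    rintro M (rfl | rfl | rfl)
    · exact ⟨by ext i j; fin_cases i <;> fin_cases j <;>
        simp [X0, Matrix.conjTranspose_apply, Complex.ext_iff],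
        by simp [Matrix.trace_fin_two, X0]⟩
    · exact ⟨by ext i j; fin_cases i <;> fin_cases j <;>
        simp [X1, Matrix.conjTranspose_apply, Complex.ext_iff],
        by simp [Matrix.trace_fin_two, X1]⟩
    · exact ⟨by ext i j; fin_cases i <;> fin_cases j <;>
        simp [X2, Matrix.conjTranspose_apply, Complex.ext_iff],
        by simp [Matrix.trace_fin_two, X2]⟩
  · intro A hA
    obtain ⟨h1, h2⟩ := hA
    rw [Matrix.trace_fin_two] at h2
    have e00 := congrFun (congrFun h1 0) 0
    have e10 := congrFun (congrFun h1 1) 0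
    have e11 := congrFun (congrFun h1 1) 1
    rw [Matrix.conjTranspose_apply, Matrix.neg_apply] at e00 e10 e11
    have r00 : (A 0 0).re = 0 := by
      have := congrArg Complex.re e00
      simp [Complex.star_def] at this
      linarith
    have r11 : (A 1 1).re = 0 := by
      have := congrArg Complex.re e11
      simp [Complex.star_def] at this
      linarith
    have cre : (A 0 1).re = -(A 1 0).re := by
      have := congrArg Complex.re e10
      simpa [Complex.star_def] using this
    have cim : (A 0 1).im = (A 1 0).im := by
      have := congrArg Complex.im e10
      simp [Complex.star_def] at this
      linarith
    have tim : (A 1 1).im = -(A 0 0).im := by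
      have := congrArg Complex.im h2
      simp at this
      linarith
    have hdec : A = (A 0 1).im • X0 + (A 0 1).re • X1 + (A 0 0).im • X2 := by
      ext i j
      fin_cases i <;> fin_cases j <;> refine Complex.ext ?_ ?_ <;>
        simp [X0, X1, X2, Matrix.add_apply, Matrix.smul_apply,
          Complex.smul_re, Complex.smul_im] <;> linarith
    rw [hdec]
    refine add_mem (add_mem ?_ ?_) ?_ <;>
      exact Submodule.smul_mem _ _ (Submodule.subset_span (by simp))

lemma span_sl2 :
    Submodule.span ℝ ({Y0, Y1, Y2, Y3, Y4, Y5} : Set (Matrix (Fin 2) (Fin 2) ℂ)) =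
      sl2 := by
  apply le_antisymm
  · rw [Submodule.span_le]
    rintro M (rfl | rfl | rfl | rfl | rfl | rfl)
    · show (Y0).trace = 0
      norm_num [Matrix.trace_fin_two, Y0]
    · show (Y1).trace = 0
      norm_num [Matrix.trace_fin_two, Y1]
    · show (Y2).trace = 0
      norm_num [Matrix.trace_fin_two, Y2]
    · show (Y3).trace = 0
      norm_num [Matrix.trace_fin_two, Y3]
    · show (Y4).trace = 0
      norm_num [Matrix.trace_fin_two, Y4]
    · show (Y5).trace = 0
      norm_num [Matrix.trace_fin_two, Y5]
  · intro A hA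
    have h2 : A.trace = 0 := hA
    rw [Matrix.trace_fin_two] at h2
    have tre : (A 1 1).re = -(A 0 0).re := by
      have := congrArg Complex.re h2
      simp at this
      linarith
    have tim : (A 1 1).im = -(A 0 0).im := by
      have := congrArg Complex.im h2
      simp at this
      linarith
    have hdec : A = (A 0 0).re • Y0 + (((A 0 1).im - (A 1 0).im) / 2) • Y1 +
        (((A 0 1).re + (A 1 0).re) / 2) • Y2 +
        ((-((A 0 1).im + (A 1 0).im)) / 2) • Y3 +
        (((A 1 0).re - (A 0 1).re) / 2) • Y4 + (-(A 0 0).im) • Y5 := by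
      ext i j
      fin_cases i <;> fin_cases j <;> refine Complex.ext ?_ ?_ <;>
        simp [Y0, Y1, Y2, Y3, Y4, Y5, Matrix.add_apply, Matrix.smul_apply,
          Complex.smul_re, Complex.smul_im] <;> linarith
    rw [hdec]
    refine add_mem (add_mem (add_mem (add_mem (add_mem ?_ ?_) ?_) ?_) ?_) ?_ <;>
      exact Submodule.smul_mem _ _ (Submodule.subset_span (by simp))

lemma K1_eq : K1 = Submodule.span ℝ SG := by
  unfold K1
  refine congrArg (Submodule.span ℝ) ?_
  ext M
  simp only [Set.mem_setOf_eq, SG, Set.mem_insert_iff, Set.mem_singleton_iff]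
  constructor
  · rintro ⟨i, j, h1, h2, rfl⟩
    fin_cases i <;> fin_cases j
    · exact absurd h1 (by decide)
    · exact Or.inl (prodG0)
    · exact Or.inr (Or.inl (prodG1))
    · exact absurd h2 (by decide)
    · exact absurd h2 (by decide)
    · exact absurd h2 (by decide)
    · exact absurd h2 (by decide)
    · exact absurd h1 (by decide)
    · exact absurd h1 (by decide)
    · exact Or.inr (Or.inr (prodG2))
    · exact absurd h2 (by decide)
    · exact absurd h2 (by decide)
    · exact absurd h2 (by decide)
    · exact absurd h2 (by decide)
    · exact absurd h1 (by decide)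
    · exact absurd h1 (by decide)
    · exact absurd h1 (by decide)
    · exact absurd h2 (by decide)
    · exact absurd h2 (by decide)
    · exact absurd h2 (by decide)
    · exact absurd h2 (by decide)
    · exact absurd h1 (by decide)
    · exact absurd h1 (by decide)
    · exact absurd h1 (by decide)
    · exact absurd h1 (by decide)
    · exact absurd h2 (by decide)
    · exact absurd h2 (by decide)
    · exact absurd h2 (by decide)
    · exact absurd h1 (by decide)
    · exact absurd h1 (by decide)
    · exact absurd h1 (by decide)
    · exact absurd h1 (by decide)
    · exact absurd h1 (by decide)
    · exact absurd h2 (by decide)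
    · exact absurd h2 (by decide)
    · exact absurd h1 (by decide)
    · exact absurd h1 (by decide)
    · exact absurd h1 (by decide)
    · exact absurd h1 (by decide)
    · exact absurd h1 (by decide)
    · exact absurd h1 (by decide)
    · exact absurd h2 (by decide)
    · exact absurd h1 (by decide)
    · exact absurd h1 (by decide)
    · exact absurd h1 (by decide)
    · exact absurd h1 (by decide)
    · exact absurd h1 (by decide)
    · exact absurd h1 (by decide)
    · exact absurd h1 (by decide)
  · rintro (rfl | rfl | rfl)
    · exact ⟨0, 1, by decide, by decide, prodG0.symm⟩
    · exact ⟨0, 2, by decide, by decide, prodG1.symm⟩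
    · exact ⟨1, 2, by decide, by decide, prodG2.symm⟩

lemma K2_eq : K2 = Submodule.span ℝ SH := by
  unfold K2
  refine congrArg (Submodule.span ℝ) ?_
  ext M
  simp only [Set.mem_setOf_eq, SH, Set.mem_insert_iff, Set.mem_singleton_iff]
  constructor
  · rintro ⟨i, j, h1, h2, rfl⟩
    fin_cases i <;> fin_cases j
    · exact absurd h1 (by decide)
    · exact absurd h2 (by decide)
    · exact absurd h2 (by decide)
    · exact absurd h2 (by decide)
    · exact absurd h2 (by decide)
    · exact absurd h2 (by decide)
    · exact absurd h2 (by decide)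
    · exact absurd h1 (by decide)
    · exact absurd h1 (by decide)
    · exact absurd h2 (by decide)
    · exact absurd h2 (by decide)
    · exact absurd h2 (by decide)
    · exact absurd h2 (by decide)
    · exact absurd h2 (by decide)
    · exact absurd h1 (by decide)
    · exact absurd h1 (by decide)
    · exact absurd h1 (by decide)
    · exact absurd h2 (by decide)
    · exact absurd h2 (by decide)
    · exact absurd h2 (by decide)
    · exact absurd h2 (by decide)
    · exact absurd h1 (by decide)
    · exact absurd h1 (by decide)
    · exact absurd h1 (by decide)
    · exact absurd h1 (by decide)
    · exact Or.inl (prodH0)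
    · exact Or.inr (Or.inl (prodH1))
    · exact Or.inr (Or.inr (Or.inl (prodH2)))
    · exact absurd h1 (by decide)
    · exact absurd h1 (by decide)
    · exact absurd h1 (by decide)
    · exact absurd h1 (by decide)
    · exact absurd h1 (by decide)
    · exact Or.inr (Or.inr (Or.inr (Or.inl (prodH3))))
    · exact Or.inr (Or.inr (Or.inr (Or.inr (Or.inl (prodH4)))))
    · exact absurd h1 (by decide)
    · exact absurd h1 (by decide)
    · exact absurd h1 (by decide)
    · exact absurd h1 (by decide)
    · exact absurd h1 (by decide)
    · exact absurd h1 (by decide)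
    · exact Or.inr (Or.inr (Or.inr (Or.inr (Or.inr (prodH5)))))
    · exact absurd h1 (by decide)
    · exact absurd h1 (by decide)
    · exact absurd h1 (by decide)
    · exact absurd h1 (by decide)
    · exact absurd h1 (by decide)
    · exact absurd h1 (by decide)
    · exact absurd h1 (by decide)
  · rintro (rfl | rfl | rfl | rfl | rfl | rfl)
    · exact ⟨3, 4, by decide, by decide, prodH0.symm⟩
    · exact ⟨3, 5, by decide, by decide, prodH1.symm⟩
    · exact ⟨3, 6, by decide, by decide, prodH2.symm⟩
    · exact ⟨4, 5, by decide, by decide, prodH3.symm⟩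
    · exact ⟨4, 6, by decide, by decide, prodH4.symm⟩
    · exact ⟨5, 6, by decide, by decide, prodH5.symm⟩

lemma baseJG : ∀ a ∈ SG, a * Jt = Jt * a := by
  intro a ha
  simp only [SG, Set.mem_insert_iff, Set.mem_singleton_iff] at ha
  rcases ha with rfl | rfl | rfl
  exacts [cJG0, cJG1, cJG2]

lemma baseJH : ∀ a ∈ SH, a * Jt = Jt * a := by
  intro a ha
  simp only [SH, Set.mem_insert_iff, Set.mem_singleton_iff] at ha
  rcases ha with rfl | rfl | rfl | rfl | rfl | rfl
  exacts [cJH0, cJH1, cJH2, cJH3, cJH4, cJH5]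

lemma baseX : ∀ a ∈ SG, ∀ b ∈ SH, a * b = b * a := by
  intro a ha b hb
  simp only [SG, Set.mem_insert_iff, Set.mem_singleton_iff] at ha
  simp only [SH, Set.mem_insert_iff, Set.mem_singleton_iff] at hb
  rcases ha with rfl | rfl | rfl <;> rcases hb with rfl | rfl | rfl | rfl | rfl | rfl
  exacts [cx00, cx01, cx02, cx03, cx04, cx05, cx10, cx11, cx12, cx13, cx14, cx15, cx20, cx21, cx22, cx23, cx24, cx25]

lemma baseBrG : ∀ a ∈ SG, ∀ b ∈ SG, a * b - b * a ∈ Submodule.span ℝ SG := by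
  intro a ha b hb
  simp only [SG, Set.mem_insert_iff, Set.mem_singleton_iff] at ha hb
  rcases ha with rfl | rfl | rfl <;> rcases hb with rfl | rfl | rfl
  · rw [sub_self]; exact Submodule.zero_mem _
  · rw [brG01]; exact Submodule.neg_mem _ (Submodule.add_mem _ (Submodule.subset_span (by simp [SG])) (Submodule.subset_span (by simp [SG])))
  · rw [brG02]; exact Submodule.add_mem _ (Submodule.subset_span (by simp [SG])) (Submodule.subset_span (by simp [SG]))
  · rw [brG10]; exact Submodule.add_mem _ (Submodule.subset_span (by simp [SG])) (Submodule.subset_span (by simp [SG]))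
  · rw [sub_self]; exact Submodule.zero_mem _
  · rw [brG12]; exact Submodule.neg_mem _ (Submodule.add_mem _ (Submodule.subset_span (by simp [SG])) (Submodule.subset_span (by simp [SG])))
  · rw [brG20]; exact Submodule.neg_mem _ (Submodule.add_mem _ (Submodule.subset_span (by simp [SG])) (Submodule.subset_span (by simp [SG])))
  · rw [brG21]; exact Submodule.add_mem _ (Submodule.subset_span (by simp [SG])) (Submodule.subset_span (by simp [SG]))
  · rw [sub_self]; exact Submodule.zero_mem _

lemma baseBrH : ∀ a ∈ SH, ∀ b ∈ SH, a * b - b * a ∈ Submodule.span ℝ SH := by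
  intro a ha b hb
  simp only [SH, Set.mem_insert_iff, Set.mem_singleton_iff] at ha hb
  rcases ha with rfl | rfl | rfl | rfl | rfl | rfl <;> rcases hb with rfl | rfl | rfl | rfl | rfl | rfl
  · rw [sub_self]; exact Submodule.zero_mem _
  · rw [brH01]; exact Submodule.neg_mem _ (Submodule.add_mem _ (Submodule.subset_span (by simp [SH])) (Submodule.subset_span (by simp [SH])))
  · rw [brH02]; exact Submodule.neg_mem _ (Submodule.add_mem _ (Submodule.subset_span (by simp [SH])) (Submodule.subset_span (by simp [SH])))
  · rw [brH03]; exact Submodule.neg_mem _ (Submodule.add_mem _ (Submodule.subset_span (by simp [SH])) (Submodule.subset_span (by simp [SH])))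
  · rw [brH04]; exact Submodule.neg_mem _ (Submodule.add_mem _ (Submodule.subset_span (by simp [SH])) (Submodule.subset_span (by simp [SH])))
  · rw [chH05, sub_self]; exact Submodule.zero_mem _
  · rw [brH10]; exact Submodule.add_mem _ (Submodule.subset_span (by simp [SH])) (Submodule.subset_span (by simp [SH]))
  · rw [sub_self]; exact Submodule.zero_mem _
  · rw [brH12]; exact Submodule.neg_mem _ (Submodule.add_mem _ (Submodule.subset_span (by simp [SH])) (Submodule.subset_span (by simp [SH])))
  · rw [brH13]; exact Submodule.add_mem _ (Submodule.subset_span (by simp [SH])) (Submodule.subset_span (by simp [SH]))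
  · rw [chH14, sub_self]; exact Submodule.zero_mem _
  · rw [brH15]; exact Submodule.neg_mem _ (Submodule.add_mem _ (Submodule.subset_span (by simp [SH])) (Submodule.subset_span (by simp [SH])))
  · rw [brH20]; exact Submodule.add_mem _ (Submodule.subset_span (by simp [SH])) (Submodule.subset_span (by simp [SH]))
  · rw [brH21]; exact Submodule.add_mem _ (Submodule.subset_span (by simp [SH])) (Submodule.subset_span (by simp [SH]))
  · rw [sub_self]; exact Submodule.zero_mem _
  · rw [chH23, sub_self]; exact Submodule.zero_mem _
  · rw [brH24]; exact Submodule.add_mem _ (Submodule.subset_span (by simp [SH])) (Submodule.subset_span (by simp [SH]))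
  · rw [brH25]; exact Submodule.add_mem _ (Submodule.subset_span (by simp [SH])) (Submodule.subset_span (by simp [SH]))
  · rw [brH30]; exact Submodule.add_mem _ (Submodule.subset_span (by simp [SH])) (Submodule.subset_span (by simp [SH]))
  · rw [brH31]; exact Submodule.neg_mem _ (Submodule.add_mem _ (Submodule.subset_span (by simp [SH])) (Submodule.subset_span (by simp [SH])))
  · rw [chH23, sub_self]; exact Submodule.zero_mem _
  · rw [sub_self]; exact Submodule.zero_mem _
  · rw [brH34]; exact Submodule.add_mem _ (Submodule.subset_span (by simp [SH])) (Submodule.subset_span (by simp [SH]))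
  · rw [brH35]; exact Submodule.neg_mem _ (Submodule.add_mem _ (Submodule.subset_span (by simp [SH])) (Submodule.subset_span (by simp [SH])))
  · rw [brH40]; exact Submodule.add_mem _ (Submodule.subset_span (by simp [SH])) (Submodule.subset_span (by simp [SH]))
  · rw [chH14, sub_self]; exact Submodule.zero_mem _
  · rw [brH42]; exact Submodule.neg_mem _ (Submodule.add_mem _ (Submodule.subset_span (by simp [SH])) (Submodule.subset_span (by simp [SH])))
  · rw [brH43]; exact Submodule.neg_mem _ (Submodule.add_mem _ (Submodule.subset_span (by simp [SH])) (Submodule.subset_span (by simp [SH])))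
  · rw [sub_self]; exact Submodule.zero_mem _
  · rw [brH45]; exact Submodule.add_mem _ (Submodule.subset_span (by simp [SH])) (Submodule.subset_span (by simp [SH]))
  · rw [chH05, sub_self]; exact Submodule.zero_mem _
  · rw [brH51]; exact Submodule.add_mem _ (Submodule.subset_span (by simp [SH])) (Submodule.subset_span (by simp [SH]))
  · rw [brH52]; exact Submodule.neg_mem _ (Submodule.add_mem _ (Submodule.subset_span (by simp [SH])) (Submodule.subset_span (by simp [SH])))
  · rw [brH53]; exact Submodule.add_mem _ (Submodule.subset_span (by simp [SH])) (Submodule.subset_span (by simp [SH]))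
  · rw [brH54]; exact Submodule.neg_mem _ (Submodule.add_mem _ (Submodule.subset_span (by simp [SH])) (Submodule.subset_span (by simp [SH])))
  · rw [sub_self]; exact Submodule.zero_mem _

lemma baseHomF : ∀ a ∈ SG, ∀ b ∈ SG, fL (a * b - b * a) = fL a * fL b - fL b * fL a := by
  intro a ha b hb
  simp only [SG, Set.mem_insert_iff, Set.mem_singleton_iff] at ha hb
  rcases ha with rfl | rfl | rfl <;> rcases hb with rfl | rfl | rfl
  · simp
  · rw [brG01, _root_.map_neg, _root_.map_add, frG2, frG0, frG1]; exact (bX01).symm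
  · rw [brG02, _root_.map_add, frG1, frG0, frG2]; exact (bX02).symm
  · rw [brG10, _root_.map_add, frG2, frG1, frG0]; exact (bX10).symm
  · simp
  · rw [brG12, _root_.map_neg, _root_.map_add, frG0, frG1, frG2]; exact (bX12).symm
  · rw [brG20, _root_.map_neg, _root_.map_add, frG1, frG2, frG0]; exact (bX20).symm
  · rw [brG21, _root_.map_add, frG0, frG2, frG1]; exact (bX21).symm
  · simp

lemma baseHomG : ∀ a ∈ SH, ∀ b ∈ SH, gL (a * b - b * a) = gL a * gL b - gL b * gL a := by
  intro a ha b hb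
  simp only [SH, Set.mem_insert_iff, Set.mem_singleton_iff] at ha hb
  rcases ha with rfl | rfl | rfl | rfl | rfl | rfl <;> rcases hb with rfl | rfl | rfl | rfl | rfl | rfl
  · simp
  · rw [brH01, _root_.map_neg, _root_.map_add, grH3, grH0, grH1]; exact (bY01).symm
  · rw [brH02, _root_.map_neg, _root_.map_add, grH4, grH0, grH2]; exact (bY02).symm
  · rw [brH03, _root_.map_neg, _root_.map_add, grH1, grH0, grH3]; exact (bY03).symm
  · rw [brH04, _root_.map_neg, _root_.map_add, grH2, grH0, grH4]; exact (bY04).symm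
  · rw [chH05, sub_self, map_zero, grH0, grH5]; exact (bY05).symm
  · rw [brH10, _root_.map_add, grH3, grH1, grH0]; exact (bY10).symm
  · simp
  · rw [brH12, _root_.map_neg, _root_.map_add, grH5, grH1, grH2]; exact (bY12).symm
  · rw [brH13, _root_.map_add, grH0, grH1, grH3]; exact (bY13).symm
  · rw [chH14, sub_self, map_zero, grH1, grH4]; exact (bY14).symm
  · rw [brH15, _root_.map_neg, _root_.map_add, grH2, grH1, grH5]; exact (bY15).symm
  · rw [brH20, _root_.map_add, grH4, grH2, grH0]; exact (bY20).symm
  · rw [brH21, _root_.map_add, grH5, grH2, grH1]; exact (bY21).symm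
  · simp
  · rw [chH23, sub_self, map_zero, grH2, grH3]; exact (bY23).symm
  · rw [brH24, _root_.map_add, grH0, grH2, grH4]; exact (bY24).symm
  · rw [brH25, _root_.map_add, grH1, grH2, grH5]; exact (bY25).symm
  · rw [brH30, _root_.map_add, grH1, grH3, grH0]; exact (bY30).symm
  · rw [brH31, _root_.map_neg, _root_.map_add, grH0, grH3, grH1]; exact (bY31).symm
  · rw [chH23, sub_self, map_zero, grH3, grH2]; exact (bY32).symm
  · simp
  · rw [brH34, _root_.map_add, grH5, grH3, grH4]; exact (bY34).symm
  · rw [brH35, _root_.map_neg, _root_.map_add, grH4, grH3, grH5]; exact (bY35).symm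
  · rw [brH40, _root_.map_add, grH2, grH4, grH0]; exact (bY40).symm
  · rw [chH14, sub_self, map_zero, grH4, grH1]; exact (bY41).symm
  · rw [brH42, _root_.map_neg, _root_.map_add, grH0, grH4, grH2]; exact (bY42).symm
  · rw [brH43, _root_.map_neg, _root_.map_add, grH5, grH4, grH3]; exact (bY43).symm
  · simp
  · rw [brH45, _root_.map_add, grH3, grH4, grH5]; exact (bY45).symm
  · rw [chH05, sub_self, map_zero, grH5, grH0]; exact (bY50).symm
  · rw [brH51, _root_.map_add, grH2, grH5, grH1]; exact (bY51).symm
  · rw [brH52, _root_.map_neg, _root_.map_add, grH1, grH5, grH2]; exact (bY52).symm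
  · rw [brH53, _root_.map_add, grH4, grH5, grH3]; exact (bY53).symm
  · rw [brH54, _root_.map_neg, _root_.map_add, grH3, grH5, grH4]; exact (bY54).symm
  · simp

lemma baseInvF : ∀ a ∈ SG, phiF (fL a) = a := by
  intro a ha
  simp only [SG, Set.mem_insert_iff, Set.mem_singleton_iff] at ha
  rcases ha with rfl | rfl | rfl
  · rw [frG0, phiX0]
  · rw [frG1, phiX1]
  · rw [frG2, phiX2]

lemma baseInvG : ∀ a ∈ SH, psiG (gL a) = a := by
  intro a ha
  simp only [SH, Set.mem_insert_iff, Set.mem_singleton_iff] at ha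
  rcases ha with rfl | rfl | rfl | rfl | rfl | rfl
  · rw [grH0, psiY0]
  · rw [grH1, psiY1]
  · rw [grH2, psiY2]
  · rw [grH3, psiY3]
  · rw [grH4, psiY4]
  · rw [grH5, psiY5]

/-- `K₁` and `K₂` commute with `J̃` and with each other, are Lie
subalgebras, `K₁ ≅ su(2)` and `K₂ ≅ sl(2,ℂ)` as real Lie algebras. -/
theorem su2_and_sl2C_inside_so43 :
    (∀ A ∈ K1, A * Jt = Jt * A) ∧
    (∀ A ∈ K2, A * Jt = Jt * A) ∧
    (∀ A ∈ K1, ∀ B ∈ K2, A * B = B * A) ∧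
    (∀ A ∈ K1, ∀ B ∈ K1, A * B - B * A ∈ K1) ∧
    (∀ A ∈ K2, ∀ B ∈ K2, A * B - B * A ∈ K2) ∧
    (∃ f : Matrix (Fin 8) (Fin 8) ℝ →ₗ[ℝ] Matrix (Fin 2) (Fin 2) ℂ,
      Set.InjOn f K1 ∧ f '' K1 = {A | Aᴴ = -A ∧ A.trace = 0} ∧
      ∀ A ∈ K1, ∀ B ∈ K1, f (A * B - B * A) = f A * f B - f B * f A) ∧
    (∃ g : Matrix (Fin 8) (Fin 8) ℝ →ₗ[ℝ] Matrix (Fin 2) (Fin 2) ℂ,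
      Set.InjOn g K2 ∧ g '' K2 = {A | A.trace = 0} ∧
      ∀ A ∈ K2, ∀ B ∈ K2, g (A * B - B * A) = g A * g B - g B * g A) := by
  have hK1 : K1 = Submodule.span ℝ SG := K1_eq
  have hK2 : K2 = Submodule.span ℝ SH := K2_eq
  refine ⟨?_, ?_, ?_, ?_, ?_, ⟨fL, ?_, ?_, ?_⟩, ⟨gL, ?_, ?_, ?_⟩⟩
  · intro A hA
    rw [hK1] at hA
    exact span_comm baseJG A hA
  · intro A hA
    rw [hK2] at hA
    exact span_comm baseJH A hA
  · intro A hA B hB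
    rw [hK1] at hA
    rw [hK2] at hB
    exact span_comm₂ baseX A hA B hB
  · intro A hA B hB
    rw [hK1] at hA hB ⊢
    exact span_bracket baseBrG A hA B hB
  · intro A hA B hB
    rw [hK2] at hA hB ⊢
    exact span_bracket baseBrH A hA B hB
  · intro A hA B hB he
    have hA' : A ∈ Submodule.span ℝ SG := by rw [hK1] at hA; exact hA
    have hB' : B ∈ Submodule.span ℝ SG := by rw [hK1] at hB; exact hB
    have h := span_leftinv fL phiF baseInvF
    rw [← h A hA', ← h B hB', he]
  · show fL '' ↑K1 = _
    rw [hK1, ← Submodule.map_coe fL, Submodule.map_span]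
    have himg : fL '' SG = ({X0, X1, X2} : Set _) := by
      simp only [SG, Set.image_insert_eq, Set.image_singleton, frG0, frG1, frG2]
    rw [himg, span_su2]
    rfl
  · intro A hA B hB
    rw [hK1] at hA hB
    exact span_lie_hom fL baseHomF A hA B hB
  · intro A hA B hB he
    have hA' : A ∈ Submodule.span ℝ SH := by rw [hK2] at hA; exact hA
    have hB' : B ∈ Submodule.span ℝ SH := by rw [hK2] at hB; exact hB
    have h := span_leftinv gL psiG baseInvG
    rw [← h A hA', ← h B hB', he]
  · show gL '' ↑K2 = _
    rw [hK2, ← Submodule.map_coe gL, Submodule.map_span]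
    have himg : gL '' SH = ({Y0, Y1, Y2, Y3, Y4, Y5} : Set _) := by
      simp only [SH, Set.image_insert_eq, Set.image_singleton, grH0, grH1, grH2, grH3,
        grH4, grH5]
    rw [himg, span_sl2]
    rfl
  · intro A hA B hB
    rw [hK2] at hA hB
    exact span_lie_hom gL baseHomG A hA B hB

end
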